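/- For every M ∈ (0,∞) there exists a constant C(M) ∈ (0,∞) such that for all r ∈ 𝒱_M and all x, x̃ ∈ ℓ̃₂, ( Σ_{i=0}^∞ ( G_i(x,r) − G_i(x̃,r) )² )^{1/2} ≤ C(M) · ‖x − x̃‖₂. -/
import Mathlib


noncomputable section

open scoped BigOperators

/-- Tail sum `Σ_{m=j+1}^∞ r m`. -/
def tsumTail (r : ℕ → ℝ) (j : ℕ) : ℝ := ∑' m : ℕ, r (j + 1 + m)

/-- Membership in `𝒮`: nonnegative summable sequences with total mass 1. -/
def memS (r : ℕ → ℝ) : Prop := (∀ j, 0 ≤ r j) ∧ Summable r ∧ ∑' j, r j = 1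

/-- Membership in `ℓ̃₂ = {x ∈ ℓ² : Σ_j j²x_j² < ∞, Σ_j x_j = 0}`. -/
def memLtwoTilde (x : ℕ → ℝ) : Prop :=
  Summable (fun j => (x j) ^ 2) ∧ Summable (fun j : ℕ => (j : ℝ) ^ 2 * (x j) ^ 2) ∧
    (∑' j, x j) = 0

/-- `ξ¹_j(x,r)`. -/
def xi1 (L k : ℕ) (j : ℕ) (x r : ℕ → ℝ) : ℝ :=
  (∑ i₁ ∈ Finset.range k, (i₁ : ℝ) *
      ((∑ m ∈ Finset.range j, r m) ^ (i₁ - 1) / (i₁.factorial : ℝ)) *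
      ∑ i₂ ∈ Finset.Icc 1 (L - i₁),
        (min i₂ (k - i₁) : ℝ) * (r j ^ i₂ / (i₂.factorial : ℝ)) *
          ((tsumTail r j) ^ (L - i₁ - i₂) / ((L - i₁ - i₂).factorial : ℝ))) *
    (∑ m ∈ Finset.range j, x m)

/-- `ξ²_j(x,r)`. -/
def xi2 (L k : ℕ) (j : ℕ) (x r : ℕ → ℝ) : ℝ :=
  (∑ i₁ ∈ Finset.range k,
      ((∑ m ∈ Finset.range j, r m) ^ i₁ / (i₁.factorial : ℝ)) *
      ∑ i₂ ∈ Finset.Icc 1 (L - i₁),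
        (i₂ : ℝ) * (min i₂ (k - i₁) : ℝ) * (r j ^ (i₂ - 1) / (i₂.factorial : ℝ)) *
          ((tsumTail r j) ^ (L - i₁ - i₂) / ((L - i₁ - i₂).factorial : ℝ))) * x j

/-- `ξ³_j(x,r)`. -/
def xi3 (L k : ℕ) (j : ℕ) (x r : ℕ → ℝ) : ℝ :=
  (∑ i₁ ∈ Finset.range k,
      ((∑ m ∈ Finset.range j, r m) ^ i₁ / (i₁.factorial : ℝ)) *
      ∑ i₂ ∈ Finset.Icc 1 (L - i₁),
        ((L - i₁ - i₂ : ℕ) : ℝ) * (min i₂ (k - i₁) : ℝ) * (r j ^ i₂ / (i₂.factorial : ℝ)) *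
          ((tsumTail r j) ^ (L - i₁ - i₂ - 1) / ((L - i₁ - i₂).factorial : ℝ))) *
    (tsumTail x j)

/-- `ξ⁴_j(x) = x_{j+1} − x_j` for `j ≥ 1`, `ξ⁴_0(x) = x_1`. -/
def xi4 (x : ℕ → ℝ) : ℕ → ℝ
  | 0 => x 1
  | (j + 1) => x (j + 2) - x (j + 1)

/-- `G_j(x,r) = λ·L!·(ξ¹_{j−1} − ξ¹_j + ξ²_{j−1} − ξ²_j + ξ³_{j−1} − ξ³_j) + k·ξ⁴_j`,
with the convention `ξ¹_{−1} = ξ²_{−1} = ξ³_{−1} = 0`. -/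
def Gmap (L k : ℕ) (lam : ℝ) (x r : ℕ → ℝ) : ℕ → ℝ
  | 0 => lam * (L.factorial : ℝ) * (-(xi1 L k 0 x r) - xi2 L k 0 x r - xi3 L k 0 x r)
      + (k : ℝ) * xi4 x 0
  | (j + 1) => lam * (L.factorial : ℝ) *
      (xi1 L k j x r - xi1 L k (j + 1) x r + xi2 L k j x r - xi2 L k (j + 1) x r
        + xi3 L k j x r - xi3 L k (j + 1) x r) + (k : ℝ) * xi4 x (j + 1)

/-- Membership in `𝒱_M = {r ∈ 𝒮 : Σ_i i·r_i ≤ M}`. -/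
def memV (M : ℝ) (r : ℕ → ℝ) : Prop :=
  memS r ∧ Summable (fun i : ℕ => (i : ℝ) * r i) ∧ (∑' i : ℕ, (i : ℝ) * r i) ≤ M


-- ===== auxiliary lemmas =====

lemma summable_of_memLtwoTilde {x : ℕ → ℝ} (hx : memLtwoTilde x) : Summable x := by
  have h1 : Summable (fun j : ℕ => 1 / ((j : ℝ) + 1) ^ 2) := by
    have h := (summable_nat_add_iff (f := fun n : ℕ => 1 / (n : ℝ) ^ 2) 1).2
      (Real.summable_one_div_nat_pow.2 one_lt_two)
    refine h.congr fun j => ?_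
    push_cast
    ring
  have h2 : Summable (fun j : ℕ => ((j : ℝ) + 1) ^ 2 * x j ^ 2) := by
    have hle : ∀ j : ℕ, ((j : ℝ) + 1) ^ 2 * x j ^ 2 ≤
        2 * ((j : ℝ) ^ 2 * x j ^ 2) + 2 * x j ^ 2 := by
      intro j
      have hj : (0 : ℝ) ≤ (j : ℝ) := Nat.cast_nonneg j
      nlinarith [sq_nonneg (x j), sq_nonneg ((j : ℝ) - 1), mul_nonneg hj (sq_nonneg (x j))]
    exact Summable.of_nonneg_of_le (fun j => by positivity) hle
      ((hx.2.1.mul_left 2).add (hx.1.mul_left 2))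
  apply Summable.of_abs
  apply Summable.of_nonneg_of_le (fun j => abs_nonneg _) _ (h1.add h2)
  intro j
  have hj1 : (0 : ℝ) < (j : ℝ) + 1 := by positivity
  have key : (1 / ((j : ℝ) + 1)) * (((j : ℝ) + 1) * |x j|) = |x j| := by
    field_simp
  have hinv : (1 / ((j : ℝ) + 1)) ^ 2 = 1 / ((j : ℝ) + 1) ^ 2 := by
    rw [div_pow, one_pow]
  rw [← hinv]
  nlinarith [sq_nonneg (1 / ((j : ℝ) + 1) - ((j : ℝ) + 1) * |x j|), key, sq_abs (x j),
    abs_nonneg (x j)]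

lemma tsumTail_eq (r : ℕ → ℝ) (j : ℕ) : tsumTail r j = ∑' m, r (m + (j + 1)) := by
  unfold tsumTail
  congr 1
  funext m
  congr 1
  omega

lemma tsumTail_nonneg {r : ℕ → ℝ} (hr0 : ∀ m, 0 ≤ r m) (j : ℕ) : 0 ≤ tsumTail r j :=
  tsum_nonneg fun m => hr0 _

lemma tsumTail_le_one {r : ℕ → ℝ} (hr0 : ∀ m, 0 ≤ r m) (hrs : Summable r)
    (hr1 : ∑' m, r m = 1) (j : ℕ) : tsumTail r j ≤ 1 := by
  have h := Summable.sum_add_tsum_nat_add (f := r) (j + 1) hrs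
  rw [hr1] at h
  have hs : 0 ≤ ∑ i ∈ Finset.range (j + 1), r i := Finset.sum_nonneg fun i _ => hr0 i
  rw [tsumTail_eq]
  linarith

lemma partial_le_one {r : ℕ → ℝ} (hr0 : ∀ m, 0 ≤ r m) (hrs : Summable r)
    (hr1 : ∑' m, r m = 1) (j : ℕ) : ∑ m ∈ Finset.range j, r m ≤ 1 := by
  have h := Summable.sum_le_tsum (Finset.range j) (fun i _ => hr0 i) hrs
  rwa [hr1] at h

lemma r_le_one {r : ℕ → ℝ} (hr0 : ∀ m, 0 ≤ r m) (hrs : Summable r)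
    (hr1 : ∑' m, r m = 1) (j : ℕ) : r j ≤ 1 := by
  have h := Summable.le_tsum hrs j (fun b _ => hr0 b)
  rwa [hr1] at h

lemma xi1_sq_le (L k : ℕ) (j : ℕ) (x r : ℕ → ℝ)
    (hr0 : ∀ m, 0 ≤ r m) (hrs : Summable r) (hr1 : ∑' m, r m = 1) :
    (xi1 L k j x r) ^ 2 ≤
      ((k : ℝ) ^ 2 * (L : ℝ) ^ 2 * r j) ^ 2 * (∑ m ∈ Finset.range j, x m) ^ 2 := by
  rw [xi1, mul_pow]
  apply mul_le_mul_of_nonneg_right _ (sq_nonneg _)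
  set P := ∑ m ∈ Finset.range j, r m with hPdef
  set Q := tsumTail r j with hQdef
  have hP0 : 0 ≤ P := Finset.sum_nonneg fun i _ => hr0 i
  have hP1 : P ≤ 1 := partial_le_one hr0 hrs hr1 j
  have hQ0 : 0 ≤ Q := tsumTail_nonneg hr0 j
  have hQ1 : Q ≤ 1 := tsumTail_le_one hr0 hrs hr1 j
  have hrj0 : 0 ≤ r j := hr0 j
  have hrj1 : r j ≤ 1 := r_le_one hr0 hrs hr1 j
  have hmin0 : ∀ i₁ ∈ Finset.range k, ∀ i₂ : ℕ, (0 : ℝ) ≤ min (i₂ : ℝ) ((k : ℝ) - (i₁ : ℝ)) :=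
    fun i₁ hi₁ i₂ => le_min (Nat.cast_nonneg _)
      (sub_nonneg.2 (Nat.cast_le.2 (Finset.mem_range.1 hi₁).le))
  have hA0 : 0 ≤ ∑ i₁ ∈ Finset.range k, (i₁ : ℝ) * (P ^ (i₁ - 1) / (i₁.factorial : ℝ)) *
      ∑ i₂ ∈ Finset.Icc 1 (L - i₁),
        (min i₂ (k - i₁) : ℝ) * (r j ^ i₂ / (i₂.factorial : ℝ)) *
          (Q ^ (L - i₁ - i₂) / ((L - i₁ - i₂).factorial : ℝ)) := by
    refine Finset.sum_nonneg fun i₁ hi₁ => mul_nonneg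
      (mul_nonneg (Nat.cast_nonneg _) (div_nonneg (pow_nonneg hP0 _) (Nat.cast_nonneg _)))
      (Finset.sum_nonneg fun i₂ _ => mul_nonneg
        (mul_nonneg (hmin0 i₁ hi₁ i₂) (div_nonneg (pow_nonneg hrj0 _) (Nat.cast_nonneg _)))
        (div_nonneg (pow_nonneg hQ0 _) (Nat.cast_nonneg _)))
  have hA : ∑ i₁ ∈ Finset.range k, (i₁ : ℝ) * (P ^ (i₁ - 1) / (i₁.factorial : ℝ)) *
      ∑ i₂ ∈ Finset.Icc 1 (L - i₁),
        (min i₂ (k - i₁) : ℝ) * (r j ^ i₂ / (i₂.factorial : ℝ)) *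
          (Q ^ (L - i₁ - i₂) / ((L - i₁ - i₂).factorial : ℝ))
      ≤ (k : ℝ) ^ 2 * (L : ℝ) ^ 2 * r j := by
    have hbound : ∀ i₁ ∈ Finset.range k,
        (i₁ : ℝ) * (P ^ (i₁ - 1) / (i₁.factorial : ℝ)) *
          ∑ i₂ ∈ Finset.Icc 1 (L - i₁),
            (min i₂ (k - i₁) : ℝ) * (r j ^ i₂ / (i₂.factorial : ℝ)) *
              (Q ^ (L - i₁ - i₂) / ((L - i₁ - i₂).factorial : ℝ))
        ≤ (k : ℝ) * ((L : ℝ) * ((L : ℝ) * r j)) := by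
      intro i₁ hi₁
      have houter : (i₁ : ℝ) * (P ^ (i₁ - 1) / (i₁.factorial : ℝ)) ≤ (k : ℝ) := by
        have h1 : P ^ (i₁ - 1) / (i₁.factorial : ℝ) ≤ 1 := by
          rw [div_le_one (by exact_mod_cast i₁.factorial_pos)]
          exact le_trans (pow_le_one₀ hP0 hP1) (Nat.one_le_cast.2 i₁.factorial_pos)
        calc (i₁ : ℝ) * (P ^ (i₁ - 1) / (i₁.factorial : ℝ)) ≤ (k : ℝ) * 1 :=
              mul_le_mul (Nat.cast_le.2 (le_of_lt (Finset.mem_range.1 hi₁))) h1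
                (div_nonneg (pow_nonneg hP0 _) (Nat.cast_nonneg _)) (Nat.cast_nonneg _)
          _ = (k : ℝ) := mul_one _
      have hinner0 : 0 ≤ ∑ i₂ ∈ Finset.Icc 1 (L - i₁),
          (min i₂ (k - i₁) : ℝ) * (r j ^ i₂ / (i₂.factorial : ℝ)) *
            (Q ^ (L - i₁ - i₂) / ((L - i₁ - i₂).factorial : ℝ)) :=
        Finset.sum_nonneg fun i₂ _ => mul_nonneg
          (mul_nonneg (hmin0 i₁ hi₁ i₂) (div_nonneg (pow_nonneg hrj0 _) (Nat.cast_nonneg _)))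
          (div_nonneg (pow_nonneg hQ0 _) (Nat.cast_nonneg _))
      have hinner : ∑ i₂ ∈ Finset.Icc 1 (L - i₁),
          (min i₂ (k - i₁) : ℝ) * (r j ^ i₂ / (i₂.factorial : ℝ)) *
            (Q ^ (L - i₁ - i₂) / ((L - i₁ - i₂).factorial : ℝ))
          ≤ (L : ℝ) * ((L : ℝ) * r j) := by
        have hterm : ∀ i₂ ∈ Finset.Icc 1 (L - i₁),
            (min i₂ (k - i₁) : ℝ) * (r j ^ i₂ / (i₂.factorial : ℝ)) *
              (Q ^ (L - i₁ - i₂) / ((L - i₁ - i₂).factorial : ℝ)) ≤ (L : ℝ) * r j := by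
          intro i₂ hi₂
          have hmem := Finset.mem_Icc.1 hi₂
          have ha : min (i₂ : ℝ) ((k : ℝ) - (i₁ : ℝ)) ≤ (L : ℝ) :=
            le_trans (min_le_left _ _)
              (Nat.cast_le.2 (le_trans hmem.2 (Nat.sub_le L i₁)))
          have hb : r j ^ i₂ / (i₂.factorial : ℝ) ≤ r j := by
            have h2 : r j ^ i₂ ≤ r j := by
              have := pow_le_pow_of_le_one hrj0 hrj1 hmem.1
              simpa using this
            exact le_trans (div_le_self (pow_nonneg hrj0 _)
              (Nat.one_le_cast.2 (Nat.factorial_pos _))) h2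
          have hc : Q ^ (L - i₁ - i₂) / ((L - i₁ - i₂).factorial : ℝ) ≤ 1 := by
            rw [div_le_one (by exact_mod_cast (L - i₁ - i₂).factorial_pos)]
            exact le_trans (pow_le_one₀ hQ0 hQ1) (Nat.one_le_cast.2 (Nat.factorial_pos _))
          calc (min i₂ (k - i₁) : ℝ) * (r j ^ i₂ / (i₂.factorial : ℝ)) *
                (Q ^ (L - i₁ - i₂) / ((L - i₁ - i₂).factorial : ℝ))
              ≤ ((L : ℝ) * r j) * 1 :=
                mul_le_mul (mul_le_mul ha hb
                    (div_nonneg (pow_nonneg hrj0 _) (Nat.cast_nonneg _)) (Nat.cast_nonneg _))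
                  hc (div_nonneg (pow_nonneg hQ0 _) (Nat.cast_nonneg _))
                  (mul_nonneg (Nat.cast_nonneg _) hrj0)
            _ = (L : ℝ) * r j := mul_one _
        calc ∑ i₂ ∈ Finset.Icc 1 (L - i₁),
              (min i₂ (k - i₁) : ℝ) * (r j ^ i₂ / (i₂.factorial : ℝ)) *
                (Q ^ (L - i₁ - i₂) / ((L - i₁ - i₂).factorial : ℝ))
            ≤ (Finset.Icc 1 (L - i₁)).card • ((L : ℝ) * r j) :=
              Finset.sum_le_card_nsmul _ _ _ hterm
          _ = ((Finset.Icc 1 (L - i₁)).card : ℝ) * ((L : ℝ) * r j) := nsmul_eq_mul _ _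
          _ ≤ (L : ℝ) * ((L : ℝ) * r j) := by
              apply mul_le_mul_of_nonneg_right _ (mul_nonneg (Nat.cast_nonneg _) hrj0)
              rw [Nat.card_Icc]
              exact_mod_cast Nat.le_of_lt_succ (by omega)
      exact mul_le_mul houter hinner hinner0 (Nat.cast_nonneg _)
    calc _ ≤ ∑ _i₁ ∈ Finset.range k, (k : ℝ) * ((L : ℝ) * ((L : ℝ) * r j)) :=
          Finset.sum_le_sum hbound
      _ = (k : ℝ) ^ 2 * (L : ℝ) ^ 2 * r j := by
          rw [Finset.sum_const, Finset.card_range, nsmul_eq_mul]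
          ring
  exact pow_le_pow_left₀ hA0 hA 2

lemma xi2_sq_le (L k : ℕ) (j : ℕ) (x r : ℕ → ℝ)
    (hr0 : ∀ m, 0 ≤ r m) (hrs : Summable r) (hr1 : ∑' m, r m = 1) :
    (xi2 L k j x r) ^ 2 ≤ ((k : ℝ) * (L : ℝ) ^ 3) ^ 2 * (x j) ^ 2 := by
  rw [xi2, mul_pow]
  apply mul_le_mul_of_nonneg_right _ (sq_nonneg _)
  set P := ∑ m ∈ Finset.range j, r m with hPdef
  set Q := tsumTail r j with hQdef
  have hP0 : 0 ≤ P := Finset.sum_nonneg fun i _ => hr0 i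
  have hP1 : P ≤ 1 := partial_le_one hr0 hrs hr1 j
  have hQ0 : 0 ≤ Q := tsumTail_nonneg hr0 j
  have hQ1 : Q ≤ 1 := tsumTail_le_one hr0 hrs hr1 j
  have hrj0 : 0 ≤ r j := hr0 j
  have hrj1 : r j ≤ 1 := r_le_one hr0 hrs hr1 j
  have hmin0 : ∀ i₁ ∈ Finset.range k, ∀ i₂ : ℕ, (0 : ℝ) ≤ min (i₂ : ℝ) ((k : ℝ) - (i₁ : ℝ)) :=
    fun i₁ hi₁ i₂ => le_min (Nat.cast_nonneg _)
      (sub_nonneg.2 (Nat.cast_le.2 (Finset.mem_range.1 hi₁).le))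
  have hfac1 : ∀ n : ℕ, (1 : ℝ) ≤ (n.factorial : ℝ) :=
    fun n => Nat.one_le_cast.2 n.factorial_pos
  have hA0 : (0 : ℝ) ≤ ∑ i₁ ∈ Finset.range k, (P ^ i₁ / (i₁.factorial : ℝ)) *
      ∑ i₂ ∈ Finset.Icc 1 (L - i₁),
        (i₂ : ℝ) * (min (i₂ : ℝ) ((k : ℝ) - (i₁ : ℝ))) * (r j ^ (i₂ - 1) / (i₂.factorial : ℝ)) *
          (Q ^ (L - i₁ - i₂) / ((L - i₁ - i₂).factorial : ℝ)) := by
    refine Finset.sum_nonneg fun i₁ hi₁ => mul_nonneg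
      (div_nonneg (pow_nonneg hP0 _) (Nat.cast_nonneg _))
      (Finset.sum_nonneg fun i₂ _ => mul_nonneg (mul_nonneg
        (mul_nonneg (Nat.cast_nonneg _) (hmin0 i₁ hi₁ i₂))
        (div_nonneg (pow_nonneg hrj0 _) (Nat.cast_nonneg _)))
        (div_nonneg (pow_nonneg hQ0 _) (Nat.cast_nonneg _)))
  refine pow_le_pow_left₀ hA0 ?_ 2
  have hbound : ∀ i₁ ∈ Finset.range k,
      (P ^ i₁ / (i₁.factorial : ℝ)) *
        ∑ i₂ ∈ Finset.Icc 1 (L - i₁),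
          (i₂ : ℝ) * (min (i₂ : ℝ) ((k : ℝ) - (i₁ : ℝ))) *
            (r j ^ (i₂ - 1) / (i₂.factorial : ℝ)) *
            (Q ^ (L - i₁ - i₂) / ((L - i₁ - i₂).factorial : ℝ))
      ≤ 1 * ((L : ℝ) * ((L : ℝ) * (L : ℝ))) := by
    intro i₁ hi₁
    have houter : P ^ i₁ / (i₁.factorial : ℝ) ≤ 1 := by
      rw [div_le_one (by exact_mod_cast i₁.factorial_pos)]
      exact le_trans (pow_le_one₀ hP0 hP1) (hfac1 _)
    have hinner0 : (0 : ℝ) ≤ ∑ i₂ ∈ Finset.Icc 1 (L - i₁),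
        (i₂ : ℝ) * (min (i₂ : ℝ) ((k : ℝ) - (i₁ : ℝ))) *
          (r j ^ (i₂ - 1) / (i₂.factorial : ℝ)) *
          (Q ^ (L - i₁ - i₂) / ((L - i₁ - i₂).factorial : ℝ)) :=
      Finset.sum_nonneg fun i₂ _ => mul_nonneg (mul_nonneg
        (mul_nonneg (Nat.cast_nonneg _) (hmin0 i₁ hi₁ i₂))
        (div_nonneg (pow_nonneg hrj0 _) (Nat.cast_nonneg _)))
        (div_nonneg (pow_nonneg hQ0 _) (Nat.cast_nonneg _))
    have hinner : ∑ i₂ ∈ Finset.Icc 1 (L - i₁),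
        (i₂ : ℝ) * (min (i₂ : ℝ) ((k : ℝ) - (i₁ : ℝ))) *
          (r j ^ (i₂ - 1) / (i₂.factorial : ℝ)) *
          (Q ^ (L - i₁ - i₂) / ((L - i₁ - i₂).factorial : ℝ))
        ≤ (L : ℝ) * ((L : ℝ) * (L : ℝ)) := by
      have hterm : ∀ i₂ ∈ Finset.Icc 1 (L - i₁),
          (i₂ : ℝ) * (min (i₂ : ℝ) ((k : ℝ) - (i₁ : ℝ))) *
            (r j ^ (i₂ - 1) / (i₂.factorial : ℝ)) *
            (Q ^ (L - i₁ - i₂) / ((L - i₁ - i₂).factorial : ℝ)) ≤ (L : ℝ) * (L : ℝ) := by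
        intro i₂ hi₂
        have hmem := Finset.mem_Icc.1 hi₂
        have hi₂L : (i₂ : ℝ) ≤ (L : ℝ) := Nat.cast_le.2 (le_trans hmem.2 (Nat.sub_le L i₁))
        have ha : min (i₂ : ℝ) ((k : ℝ) - (i₁ : ℝ)) ≤ (L : ℝ) := le_trans (min_le_left _ _) hi₂L
        have hb : r j ^ (i₂ - 1) / (i₂.factorial : ℝ) ≤ 1 := by
          rw [div_le_one (by exact_mod_cast i₂.factorial_pos)]
          exact le_trans (pow_le_one₀ hrj0 hrj1) (hfac1 _)
        have hc : Q ^ (L - i₁ - i₂) / ((L - i₁ - i₂).factorial : ℝ) ≤ 1 := by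
          rw [div_le_one (by exact_mod_cast (L - i₁ - i₂).factorial_pos)]
          exact le_trans (pow_le_one₀ hQ0 hQ1) (hfac1 _)
        calc (i₂ : ℝ) * (min (i₂ : ℝ) ((k : ℝ) - (i₁ : ℝ))) *
              (r j ^ (i₂ - 1) / (i₂.factorial : ℝ)) *
              (Q ^ (L - i₁ - i₂) / ((L - i₁ - i₂).factorial : ℝ))
            ≤ (((L : ℝ) * (L : ℝ)) * 1) * 1 := by
              refine mul_le_mul (mul_le_mul (mul_le_mul hi₂L ha (hmin0 i₁ hi₁ i₂)
                  (Nat.cast_nonneg _)) hb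
                  (div_nonneg (pow_nonneg hrj0 _) (Nat.cast_nonneg _))
                  (mul_nonneg (Nat.cast_nonneg _) (Nat.cast_nonneg _))) hc
                (div_nonneg (pow_nonneg hQ0 _) (Nat.cast_nonneg _))
                (by positivity)
          _ = (L : ℝ) * (L : ℝ) := by ring
      calc _ ≤ (Finset.Icc 1 (L - i₁)).card • ((L : ℝ) * (L : ℝ)) :=
            Finset.sum_le_card_nsmul _ _ _ hterm
        _ = ((Finset.Icc 1 (L - i₁)).card : ℝ) * ((L : ℝ) * (L : ℝ)) := nsmul_eq_mul _ _
        _ ≤ (L : ℝ) * ((L : ℝ) * (L : ℝ)) := by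
            apply mul_le_mul_of_nonneg_right _ (by positivity)
            rw [Nat.card_Icc]
            exact_mod_cast Nat.le_of_lt_succ (by omega)
    exact mul_le_mul houter hinner hinner0 zero_le_one
  calc _ ≤ ∑ _i₁ ∈ Finset.range k, 1 * ((L : ℝ) * ((L : ℝ) * (L : ℝ))) :=
        Finset.sum_le_sum hbound
    _ = (k : ℝ) * (L : ℝ) ^ 3 := by
        rw [Finset.sum_const, Finset.card_range, nsmul_eq_mul]
        ring

lemma xi3_sq_le (L k : ℕ) (j : ℕ) (x r : ℕ → ℝ)
    (hr0 : ∀ m, 0 ≤ r m) (hrs : Summable r) (hr1 : ∑' m, r m = 1) :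
    (xi3 L k j x r) ^ 2 ≤ ((k : ℝ) * (L : ℝ) ^ 3 * r j) ^ 2 * (tsumTail x j) ^ 2 := by
  rw [xi3, mul_pow]
  apply mul_le_mul_of_nonneg_right _ (sq_nonneg _)
  set P := ∑ m ∈ Finset.range j, r m with hPdef
  set Q := tsumTail r j with hQdef
  have hP0 : 0 ≤ P := Finset.sum_nonneg fun i _ => hr0 i
  have hP1 : P ≤ 1 := partial_le_one hr0 hrs hr1 j
  have hQ0 : 0 ≤ Q := tsumTail_nonneg hr0 j
  have hQ1 : Q ≤ 1 := tsumTail_le_one hr0 hrs hr1 j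
  have hrj0 : 0 ≤ r j := hr0 j
  have hrj1 : r j ≤ 1 := r_le_one hr0 hrs hr1 j
  have hmin0 : ∀ i₁ ∈ Finset.range k, ∀ i₂ : ℕ, (0 : ℝ) ≤ min (i₂ : ℝ) ((k : ℝ) - (i₁ : ℝ)) :=
    fun i₁ hi₁ i₂ => le_min (Nat.cast_nonneg _)
      (sub_nonneg.2 (Nat.cast_le.2 (Finset.mem_range.1 hi₁).le))
  have hfac1 : ∀ n : ℕ, (1 : ℝ) ≤ (n.factorial : ℝ) :=
    fun n => Nat.one_le_cast.2 n.factorial_pos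
  have hA0 : (0 : ℝ) ≤ ∑ i₁ ∈ Finset.range k, (P ^ i₁ / (i₁.factorial : ℝ)) *
      ∑ i₂ ∈ Finset.Icc 1 (L - i₁),
        ((L - i₁ - i₂ : ℕ) : ℝ) * (min (i₂ : ℝ) ((k : ℝ) - (i₁ : ℝ))) *
          (r j ^ i₂ / (i₂.factorial : ℝ)) *
          (Q ^ (L - i₁ - i₂ - 1) / ((L - i₁ - i₂).factorial : ℝ)) := by
    refine Finset.sum_nonneg fun i₁ hi₁ => mul_nonneg
      (div_nonneg (pow_nonneg hP0 _) (Nat.cast_nonneg _))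
      (Finset.sum_nonneg fun i₂ _ => mul_nonneg (mul_nonneg
        (mul_nonneg (Nat.cast_nonneg _) (hmin0 i₁ hi₁ i₂))
        (div_nonneg (pow_nonneg hrj0 _) (Nat.cast_nonneg _)))
        (div_nonneg (pow_nonneg hQ0 _) (Nat.cast_nonneg _)))
  refine pow_le_pow_left₀ hA0 ?_ 2
  have hbound : ∀ i₁ ∈ Finset.range k,
      (P ^ i₁ / (i₁.factorial : ℝ)) *
        ∑ i₂ ∈ Finset.Icc 1 (L - i₁),
          ((L - i₁ - i₂ : ℕ) : ℝ) * (min (i₂ : ℝ) ((k : ℝ) - (i₁ : ℝ))) *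
            (r j ^ i₂ / (i₂.factorial : ℝ)) *
            (Q ^ (L - i₁ - i₂ - 1) / ((L - i₁ - i₂).factorial : ℝ))
      ≤ 1 * ((L : ℝ) * ((L : ℝ) * (L : ℝ) * r j)) := by
    intro i₁ hi₁
    have houter : P ^ i₁ / (i₁.factorial : ℝ) ≤ 1 := by
      rw [div_le_one (by exact_mod_cast i₁.factorial_pos)]
      exact le_trans (pow_le_one₀ hP0 hP1) (hfac1 _)
    have hinner0 : (0 : ℝ) ≤ ∑ i₂ ∈ Finset.Icc 1 (L - i₁),
        ((L - i₁ - i₂ : ℕ) : ℝ) * (min (i₂ : ℝ) ((k : ℝ) - (i₁ : ℝ))) *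
          (r j ^ i₂ / (i₂.factorial : ℝ)) *
          (Q ^ (L - i₁ - i₂ - 1) / ((L - i₁ - i₂).factorial : ℝ)) :=
      Finset.sum_nonneg fun i₂ _ => mul_nonneg (mul_nonneg
        (mul_nonneg (Nat.cast_nonneg _) (hmin0 i₁ hi₁ i₂))
        (div_nonneg (pow_nonneg hrj0 _) (Nat.cast_nonneg _)))
        (div_nonneg (pow_nonneg hQ0 _) (Nat.cast_nonneg _))
    have hinner : ∑ i₂ ∈ Finset.Icc 1 (L - i₁),
        ((L - i₁ - i₂ : ℕ) : ℝ) * (min (i₂ : ℝ) ((k : ℝ) - (i₁ : ℝ))) *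
          (r j ^ i₂ / (i₂.factorial : ℝ)) *
          (Q ^ (L - i₁ - i₂ - 1) / ((L - i₁ - i₂).factorial : ℝ))
        ≤ (L : ℝ) * ((L : ℝ) * (L : ℝ) * r j) := by
      have hterm : ∀ i₂ ∈ Finset.Icc 1 (L - i₁),
          ((L - i₁ - i₂ : ℕ) : ℝ) * (min (i₂ : ℝ) ((k : ℝ) - (i₁ : ℝ))) *
            (r j ^ i₂ / (i₂.factorial : ℝ)) *
            (Q ^ (L - i₁ - i₂ - 1) / ((L - i₁ - i₂).factorial : ℝ))
          ≤ (L : ℝ) * (L : ℝ) * r j := by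
        intro i₂ hi₂
        have hmem := Finset.mem_Icc.1 hi₂
        have hi₂L : (i₂ : ℝ) ≤ (L : ℝ) := Nat.cast_le.2 (le_trans hmem.2 (Nat.sub_le L i₁))
        have hL1 : ((L - i₁ - i₂ : ℕ) : ℝ) ≤ (L : ℝ) :=
          Nat.cast_le.2 (le_trans (Nat.sub_le _ _) (Nat.sub_le L i₁))
        have ha : min (i₂ : ℝ) ((k : ℝ) - (i₁ : ℝ)) ≤ (L : ℝ) := le_trans (min_le_left _ _) hi₂L
        have hb : r j ^ i₂ / (i₂.factorial : ℝ) ≤ r j := by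
          have h2 : r j ^ i₂ ≤ r j := by
            have := pow_le_pow_of_le_one hrj0 hrj1 hmem.1
            simpa using this
          exact le_trans (div_le_self (pow_nonneg hrj0 _)
            (Nat.one_le_cast.2 (Nat.factorial_pos _))) h2
        have hc : Q ^ (L - i₁ - i₂ - 1) / ((L - i₁ - i₂).factorial : ℝ) ≤ 1 := by
          rw [div_le_one (by exact_mod_cast (L - i₁ - i₂).factorial_pos)]
          exact le_trans (pow_le_one₀ hQ0 hQ1) (hfac1 _)
        calc ((L - i₁ - i₂ : ℕ) : ℝ) * (min (i₂ : ℝ) ((k : ℝ) - (i₁ : ℝ))) *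
              (r j ^ i₂ / (i₂.factorial : ℝ)) *
              (Q ^ (L - i₁ - i₂ - 1) / ((L - i₁ - i₂).factorial : ℝ))
            ≤ (((L : ℝ) * (L : ℝ)) * r j) * 1 := by
              refine mul_le_mul (mul_le_mul (mul_le_mul hL1 ha (hmin0 i₁ hi₁ i₂)
                  (Nat.cast_nonneg _)) hb
                  (div_nonneg (pow_nonneg hrj0 _) (Nat.cast_nonneg _))
                  (mul_nonneg (Nat.cast_nonneg _) (Nat.cast_nonneg _))) hc
                (div_nonneg (pow_nonneg hQ0 _) (Nat.cast_nonneg _))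
                (mul_nonneg (mul_nonneg (Nat.cast_nonneg _) (Nat.cast_nonneg _)) hrj0)
          _ = (L : ℝ) * (L : ℝ) * r j := by ring
      calc _ ≤ (Finset.Icc 1 (L - i₁)).card • ((L : ℝ) * (L : ℝ) * r j) :=
            Finset.sum_le_card_nsmul _ _ _ hterm
        _ = ((Finset.Icc 1 (L - i₁)).card : ℝ) * ((L : ℝ) * (L : ℝ) * r j) := nsmul_eq_mul _ _
        _ ≤ (L : ℝ) * ((L : ℝ) * (L : ℝ) * r j) := by
            apply mul_le_mul_of_nonneg_right _
              (mul_nonneg (mul_nonneg (Nat.cast_nonneg _) (Nat.cast_nonneg _)) hrj0)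
            rw [Nat.card_Icc]
            exact_mod_cast Nat.le_of_lt_succ (by omega)
    exact mul_le_mul houter hinner hinner0 zero_le_one
  calc _ ≤ ∑ _i₁ ∈ Finset.range k, 1 * ((L : ℝ) * ((L : ℝ) * (L : ℝ) * r j)) :=
        Finset.sum_le_sum hbound
    _ = (k : ℝ) * (L : ℝ) ^ 3 * r j := by
        rw [Finset.sum_const, Finset.card_range, nsmul_eq_mul]
        ring

lemma sq_add_seven (b1 b2 b3 b4 b5 b6 b7 : ℝ) :
    (b1 + b2 + b3 + b4 + b5 + b6 + b7) ^ 2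
      ≤ 7 * (b1 ^ 2 + b2 ^ 2 + b3 ^ 2 + b4 ^ 2 + b5 ^ 2 + b6 ^ 2 + b7 ^ 2) := by
  have h := sq_sum_le_card_mul_sum_sq (s := (Finset.univ : Finset (Fin 7)))
    (f := ![b1, b2, b3, b4, b5, b6, b7])
  simpa [Fin.sum_univ_seven] using h

lemma quad_bound (c K a1 a2 a3 a4 a5 a6 a7 : ℝ) :
    (c * (a1 + a2 + a3 + a4 + a5 + a6) + K * a7) ^ 2
      ≤ 7 * (c ^ 2 * (a1 ^ 2 + a2 ^ 2 + a3 ^ 2 + a4 ^ 2 + a5 ^ 2 + a6 ^ 2) + K ^ 2 * a7 ^ 2) := by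
  have h := sq_add_seven (c * a1) (c * a2) (c * a3) (c * a4) (c * a5) (c * a6) (K * a7)
  calc (c * (a1 + a2 + a3 + a4 + a5 + a6) + K * a7) ^ 2
      = (c * a1 + c * a2 + c * a3 + c * a4 + c * a5 + c * a6 + K * a7) ^ 2 := by ring
    _ ≤ 7 * ((c * a1) ^ 2 + (c * a2) ^ 2 + (c * a3) ^ 2 + (c * a4) ^ 2 + (c * a5) ^ 2
          + (c * a6) ^ 2 + (K * a7) ^ 2) := h
    _ = 7 * (c ^ 2 * (a1 ^ 2 + a2 ^ 2 + a3 ^ 2 + a4 ^ 2 + a5 ^ 2 + a6 ^ 2) + K ^ 2 * a7 ^ 2) := by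
        ring

lemma tsumTail_sub {x xt : ℕ → ℝ} (hx : Summable x) (hxt : Summable xt) (j : ℕ) :
    tsumTail (fun m => x m - xt m) j = tsumTail x j - tsumTail xt j := by
  unfold tsumTail
  exact Summable.tsum_sub (((summable_nat_add_iff (j + 1)).2 hx).congr fun m => by
      simp [Nat.add_comm])
    (((summable_nat_add_iff (j + 1)).2 hxt).congr fun m => by simp [Nat.add_comm])

lemma xi1_sub (L k j : ℕ) (x xt r : ℕ → ℝ) :
    xi1 L k j (fun m => x m - xt m) r = xi1 L k j x r - xi1 L k j xt r := by
  simp only [xi1, Finset.sum_sub_distrib]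
  ring

lemma xi2_sub (L k j : ℕ) (x xt r : ℕ → ℝ) :
    xi2 L k j (fun m => x m - xt m) r = xi2 L k j x r - xi2 L k j xt r := by
  simp only [xi2]
  ring

lemma xi3_sub (L k j : ℕ) {x xt : ℕ → ℝ} (r : ℕ → ℝ) (hx : Summable x) (hxt : Summable xt) :
    xi3 L k j (fun m => x m - xt m) r = xi3 L k j x r - xi3 L k j xt r := by
  simp only [xi3, tsumTail_sub hx hxt]
  ring

lemma xi4_sub (x xt : ℕ → ℝ) (i : ℕ) :
    xi4 (fun m => x m - xt m) i = xi4 x i - xi4 xt i := by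
  cases i <;> simp [xi4] <;> ring

lemma Gmap_sub (L k : ℕ) (lam : ℝ) {x xt : ℕ → ℝ} (r : ℕ → ℝ)
    (hx : Summable x) (hxt : Summable xt) (i : ℕ) :
    Gmap L k lam (fun m => x m - xt m) r i = Gmap L k lam x r i - Gmap L k lam xt r i := by
  cases i <;>
    simp only [Gmap, xi1_sub, xi2_sub, xi3_sub L k _ r hx hxt, xi4_sub] <;> ring

set_option maxHeartbeats 1600000 in
/-- for every `M ∈ (0,∞)` there is `C(M) ∈ (0,∞)` such that for all
`r ∈ 𝒱_M` and `x, x̃ ∈ ℓ̃₂`,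
`(Σ_i (G_i(x,r) − G_i(x̃,r))²)^{1/2} ≤ C(M)‖x − x̃‖₂`. -/
theorem Gmap_lipschitz (L k : ℕ) (hL : 1 ≤ L) (hk : 1 ≤ k) (hkL : k ≤ L)
    (lam : ℝ) (hlam : 0 < lam) (M : ℝ) (hM : 0 < M) :
    ∃ C : ℝ, 0 < C ∧ ∀ r x xt : ℕ → ℝ, memV M r → memLtwoTilde x → memLtwoTilde xt →
      Real.sqrt (∑' i, (Gmap L k lam x r i - Gmap L k lam xt r i) ^ 2)
        ≤ C * Real.sqrt (∑' j, (x j - xt j) ^ 2) := by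
  classical
  obtain ⟨K1, hK1def⟩ : ∃ K1 : ℝ, K1 = (k : ℝ) ^ 2 * (L : ℝ) ^ 2 := ⟨_, rfl⟩
  obtain ⟨K2, hK2def⟩ : ∃ K2 : ℝ, K2 = (k : ℝ) * (L : ℝ) ^ 3 := ⟨_, rfl⟩
  obtain ⟨c, hcdef⟩ : ∃ c : ℝ, c = lam * (L.factorial : ℝ) := ⟨_, rfl⟩
  obtain ⟨D, hDdef⟩ : ∃ D : ℝ,
      D = 14 * c ^ 2 * (K1 ^ 2 * M + K2 ^ 2 + K2 ^ 2 * (M + 1)) + 28 * (k : ℝ) ^ 2 :=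
    ⟨_, rfl⟩
  have hc0 : 0 < c := hcdef ▸ mul_pos hlam (by exact_mod_cast L.factorial_pos)
  have hk0 : (0 : ℝ) < (k : ℝ) := by exact_mod_cast hk
  have hDpos : 0 < D := by
    have h1 : 0 ≤ K1 ^ 2 * M + K2 ^ 2 + K2 ^ 2 * (M + 1) :=
      add_nonneg (add_nonneg (mul_nonneg (sq_nonneg _) hM.le) (sq_nonneg _))
        (mul_nonneg (sq_nonneg _) (by linarith))
    have h2 : 0 ≤ 14 * c ^ 2 * (K1 ^ 2 * M + K2 ^ 2 + K2 ^ 2 * (M + 1)) :=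
      mul_nonneg (by positivity) h1
    have h3 : 0 < 28 * (k : ℝ) ^ 2 := by positivity
    rw [hDdef]; linarith
  refine ⟨Real.sqrt D, Real.sqrt_pos.2 hDpos, ?_⟩
  intro r x xt hr hx hxt
  obtain ⟨⟨hr0, hrs, hr1⟩, hrms, hrm⟩ := hr
  obtain ⟨y, hydef⟩ : ∃ y : ℕ → ℝ, y = fun m => x m - xt m := ⟨_, rfl⟩
  have hyval : ∀ j, y j = x j - xt j := fun j => by rw [hydef]
  have hxs : Summable x := summable_of_memLtwoTilde hx
  have hxts : Summable xt := summable_of_memLtwoTilde hxt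
  have hys : Summable y := by rw [hydef]; exact hxs.sub hxts
  have hy2 : Summable (fun j => y j ^ 2) := by
    have hle : ∀ j, y j ^ 2 ≤ 2 * x j ^ 2 + 2 * xt j ^ 2 := by
      intro j
      rw [hyval j]
      nlinarith [sq_nonneg (x j + xt j)]
    exact Summable.of_nonneg_of_le (fun j => sq_nonneg _) hle
      ((hx.1.mul_left 2).add (hxt.1.mul_left 2))
  have hysum0 : ∑' m, y m = 0 := by
    have h1 : ∑' m, y m = ∑' m, (x m - xt m) := tsum_congr fun m => hyval m
    have h2 : ∑' m, (x m - xt m) = ∑' m, x m - ∑' m, xt m := Summable.tsum_sub hxs hxts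
    rw [h1, h2, hx.2.2, hxt.2.2, sub_zero]
  obtain ⟨Ty, hTydef⟩ : ∃ Ty : ℝ, Ty = ∑' j, y j ^ 2 := ⟨_, rfl⟩
  have hTy0 : 0 ≤ Ty := hTydef ▸ tsum_nonneg fun j => sq_nonneg (y j)
  -- partial sum and tail bounds for y
  have hSy : ∀ j : ℕ, (∑ m ∈ Finset.range j, y m) ^ 2 ≤ (j : ℝ) * Ty := by
    intro j
    calc (∑ m ∈ Finset.range j, y m) ^ 2
        ≤ (Finset.range j).card * ∑ m ∈ Finset.range j, y m ^ 2 :=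
          sq_sum_le_card_mul_sum_sq
      _ = (j : ℝ) * ∑ m ∈ Finset.range j, y m ^ 2 := by rw [Finset.card_range]
      _ ≤ (j : ℝ) * Ty := by
          rw [hTydef]
          exact mul_le_mul_of_nonneg_left
            (Summable.sum_le_tsum _ (fun i _ => sq_nonneg _) hy2) (Nat.cast_nonneg j)
  have hTyj : ∀ j : ℕ, (tsumTail y j) ^ 2 ≤ ((j : ℝ) + 1) * Ty := by
    intro j
    have htail : tsumTail y j = -∑ m ∈ Finset.range (j + 1), y m := by
      have h := Summable.sum_add_tsum_nat_add (f := y) (j + 1) hys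
      rw [hysum0] at h
      rw [tsumTail_eq]
      linarith
    rw [htail, neg_sq]
    calc (∑ m ∈ Finset.range (j + 1), y m) ^ 2
        ≤ (Finset.range (j + 1)).card * ∑ m ∈ Finset.range (j + 1), y m ^ 2 :=
          sq_sum_le_card_mul_sum_sq
      _ = ((j : ℝ) + 1) * ∑ m ∈ Finset.range (j + 1), y m ^ 2 := by
          rw [Finset.card_range]; push_cast; ring
      _ ≤ ((j : ℝ) + 1) * Ty := by
          rw [hTydef]
          exact mul_le_mul_of_nonneg_left
            (Summable.sum_le_tsum _ (fun i _ => sq_nonneg _) hy2) (by positivity)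
  have hjr : ∀ n : ℕ, ∑ i ∈ Finset.range n, (i : ℝ) * r i ≤ M := fun n =>
    le_trans (Summable.sum_le_tsum _ (fun i _ => mul_nonneg (Nat.cast_nonneg i) (hr0 i)) hrms) hrm
  have hrle1 : ∀ j, r j ≤ 1 := r_le_one hr0 hrs hr1
  have hrsum1 : ∀ n : ℕ, ∑ i ∈ Finset.range n, r i ≤ 1 := partial_le_one hr0 hrs hr1
  -- the four block estimates
  have hF1 : ∀ n : ℕ, ∑ i ∈ Finset.range n, (xi1 L k i y r) ^ 2 ≤ K1 ^ 2 * M * Ty := by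
    intro n
    have hterm : ∀ i ∈ Finset.range n,
        (xi1 L k i y r) ^ 2 ≤ (K1 ^ 2 * Ty) * ((i : ℝ) * r i) := by
      intro i _
      calc (xi1 L k i y r) ^ 2
          ≤ (K1 * r i) ^ 2 * (∑ m ∈ Finset.range i, y m) ^ 2 := by
            have := xi1_sq_le L k i y r hr0 hrs hr1
            rw [hK1def]
            exact this
        _ ≤ (K1 * r i) ^ 2 * ((i : ℝ) * Ty) :=
            mul_le_mul_of_nonneg_left (hSy i) (sq_nonneg _)
        _ = (K1 ^ 2 * Ty) * ((i : ℝ) * (r i * r i)) := by ring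
        _ ≤ (K1 ^ 2 * Ty) * ((i : ℝ) * r i) := by
            apply mul_le_mul_of_nonneg_left _ (mul_nonneg (sq_nonneg K1) hTy0)
            apply mul_le_mul_of_nonneg_left _ (Nat.cast_nonneg i)
            nlinarith [hr0 i, hrle1 i]
    calc ∑ i ∈ Finset.range n, (xi1 L k i y r) ^ 2
        ≤ ∑ i ∈ Finset.range n, (K1 ^ 2 * Ty) * ((i : ℝ) * r i) := Finset.sum_le_sum hterm
      _ = (K1 ^ 2 * Ty) * ∑ i ∈ Finset.range n, (i : ℝ) * r i := by rw [Finset.mul_sum]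
      _ ≤ (K1 ^ 2 * Ty) * M := mul_le_mul_of_nonneg_left (hjr n)
          (mul_nonneg (sq_nonneg _) hTy0)
      _ = K1 ^ 2 * M * Ty := by ring
  have hF2 : ∀ n : ℕ, ∑ i ∈ Finset.range n, (xi2 L k i y r) ^ 2 ≤ K2 ^ 2 * Ty := by
    intro n
    have hterm : ∀ i ∈ Finset.range n, (xi2 L k i y r) ^ 2 ≤ K2 ^ 2 * y i ^ 2 := by
      intro i _
      have := xi2_sq_le L k i y r hr0 hrs hr1
      rw [hK2def]
      calc (xi2 L k i y r) ^ 2 ≤ ((k : ℝ) * (L : ℝ) ^ 3) ^ 2 * y i ^ 2 := this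
        _ = ((k : ℝ) * (L : ℝ) ^ 3) ^ 2 * y i ^ 2 := rfl
    calc ∑ i ∈ Finset.range n, (xi2 L k i y r) ^ 2
        ≤ ∑ i ∈ Finset.range n, K2 ^ 2 * y i ^ 2 := Finset.sum_le_sum hterm
      _ = K2 ^ 2 * ∑ i ∈ Finset.range n, y i ^ 2 := by rw [Finset.mul_sum]
      _ ≤ K2 ^ 2 * Ty := by
          rw [hTydef]
          exact mul_le_mul_of_nonneg_left
            (Summable.sum_le_tsum _ (fun i _ => sq_nonneg _) hy2) (sq_nonneg _)
  have hF3 : ∀ n : ℕ, ∑ i ∈ Finset.range n, (xi3 L k i y r) ^ 2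
      ≤ K2 ^ 2 * (M + 1) * Ty := by
    intro n
    have hterm : ∀ i ∈ Finset.range n,
        (xi3 L k i y r) ^ 2 ≤ (K2 ^ 2 * Ty) * ((i : ℝ) * r i + r i) := by
      intro i _
      calc (xi3 L k i y r) ^ 2
          ≤ (K2 * r i) ^ 2 * (tsumTail y i) ^ 2 := by
            have := xi3_sq_le L k i y r hr0 hrs hr1
            rw [hK2def]
            exact this
        _ ≤ (K2 * r i) ^ 2 * (((i : ℝ) + 1) * Ty) :=
            mul_le_mul_of_nonneg_left (hTyj i) (sq_nonneg _)
        _ = (K2 ^ 2 * Ty) * (((i : ℝ) + 1) * (r i * r i)) := by ring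
        _ ≤ (K2 ^ 2 * Ty) * ((i : ℝ) * r i + r i) := by
            apply mul_le_mul_of_nonneg_left _ (mul_nonneg (sq_nonneg K2) hTy0)
            nlinarith [mul_nonneg (mul_nonneg (Nat.cast_nonneg i : (0 : ℝ) ≤ (i : ℝ))
                (hr0 i)) (sub_nonneg.2 (hrle1 i)),
              mul_nonneg (hr0 i) (sub_nonneg.2 (hrle1 i))]
    calc ∑ i ∈ Finset.range n, (xi3 L k i y r) ^ 2
        ≤ ∑ i ∈ Finset.range n, (K2 ^ 2 * Ty) * ((i : ℝ) * r i + r i) :=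
          Finset.sum_le_sum hterm
      _ = (K2 ^ 2 * Ty) * (∑ i ∈ Finset.range n, (i : ℝ) * r i
            + ∑ i ∈ Finset.range n, r i) := by
          simp only [mul_add, Finset.sum_add_distrib, ← Finset.mul_sum]
      _ ≤ (K2 ^ 2 * Ty) * (M + 1) := by
          apply mul_le_mul_of_nonneg_left _ (mul_nonneg (sq_nonneg _) hTy0)
          exact add_le_add (hjr n) (hrsum1 n)
      _ = K2 ^ 2 * (M + 1) * Ty := by ring
  have hF4 : ∀ n : ℕ, ∑ i ∈ Finset.range n, (xi4 y i) ^ 2 ≤ 4 * Ty := by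
    intro n
    have hshift : ∀ a : ℕ, ∑ i ∈ Finset.range n, y (i + a) ^ 2 ≤ Ty := by
      intro a
      have hsa : Summable (fun i => y (i + a) ^ 2) :=
        (summable_nat_add_iff a).2 hy2
      have h1 : ∑ i ∈ Finset.range n, y (i + a) ^ 2 ≤ ∑' i, y (i + a) ^ 2 :=
        Summable.sum_le_tsum _ (fun i _ => sq_nonneg _) hsa
      have h2 := Summable.sum_add_tsum_nat_add (f := fun j => y j ^ 2) a hy2
      have h3 : 0 ≤ ∑ i ∈ Finset.range a, y i ^ 2 :=
        Finset.sum_nonneg fun i _ => sq_nonneg _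
      rw [hTydef]
      linarith
    have ht : ∀ i, (xi4 y i) ^ 2 ≤ 2 * y (i + 0) ^ 2 + 2 * y (i + 1) ^ 2 := by
      intro i
      cases i with
      | zero => simp only [xi4]; nlinarith [sq_nonneg (y 0), sq_nonneg (y 1)]
      | succ j =>
          simp only [xi4]
          have he1 : j + 1 + 0 = j + 1 := rfl
          have he2 : j + 1 + 1 = j + 2 := rfl
          rw [he1, he2]
          nlinarith [sq_nonneg (y (j + 2) + y (j + 1))]
    calc ∑ i ∈ Finset.range n, (xi4 y i) ^ 2
        ≤ ∑ i ∈ Finset.range n, (2 * y (i + 0) ^ 2 + 2 * y (i + 1) ^ 2) :=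
          Finset.sum_le_sum fun i _ => ht i
      _ = 2 * ∑ i ∈ Finset.range n, y (i + 0) ^ 2
            + 2 * ∑ i ∈ Finset.range n, y (i + 1) ^ 2 := by
          rw [Finset.sum_add_distrib, Finset.mul_sum, Finset.mul_sum]
      _ ≤ 2 * Ty + 2 * Ty := add_le_add
          (mul_le_mul_of_nonneg_left (hshift 0) (by norm_num))
          (mul_le_mul_of_nonneg_left (hshift 1) (by norm_num))
      _ = 4 * Ty := by ring
  -- pointwise quadratic bound and assembly of the main estimate
  have hG : ∀ n : ℕ, ∑ i ∈ Finset.range n, (Gmap L k lam y r i) ^ 2 ≤ D * Ty := by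
    intro n
    cases n with
    | zero => simpa using mul_nonneg hDpos.le hTy0
    | succ m =>
      rw [Finset.sum_range_succ' (fun i => (Gmap L k lam y r i) ^ 2) m]
      have h0 : (Gmap L k lam y r 0) ^ 2
          ≤ 7 * (c ^ 2 * ((xi1 L k 0 y r) ^ 2 + (xi2 L k 0 y r) ^ 2 + (xi3 L k 0 y r) ^ 2)
              + (k : ℝ) ^ 2 * (xi4 y 0) ^ 2) := by
        have hq := quad_bound c (k : ℝ) 0 (-(xi1 L k 0 y r)) 0 (-(xi2 L k 0 y r)) 0
          (-(xi3 L k 0 y r)) (xi4 y 0)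
        have he : Gmap L k lam y r 0 = c * (0 + -(xi1 L k 0 y r) + 0 + -(xi2 L k 0 y r)
            + 0 + -(xi3 L k 0 y r)) + (k : ℝ) * xi4 y 0 := by
          simp only [Gmap, hcdef]
          ring
        rw [he]
        refine le_trans hq (le_of_eq ?_)
        ring
      have hstep : ∀ j : ℕ, (Gmap L k lam y r (j + 1)) ^ 2
          ≤ 7 * (c ^ 2 * ((xi1 L k j y r) ^ 2 + (xi1 L k (j + 1) y r) ^ 2
              + (xi2 L k j y r) ^ 2 + (xi2 L k (j + 1) y r) ^ 2
              + (xi3 L k j y r) ^ 2 + (xi3 L k (j + 1) y r) ^ 2)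
              + (k : ℝ) ^ 2 * (xi4 y (j + 1)) ^ 2) := by
        intro j
        have hq := quad_bound c (k : ℝ) (xi1 L k j y r) (-(xi1 L k (j + 1) y r))
          (xi2 L k j y r) (-(xi2 L k (j + 1) y r)) (xi3 L k j y r) (-(xi3 L k (j + 1) y r))
          (xi4 y (j + 1))
        have he : Gmap L k lam y r (j + 1) = c * (xi1 L k j y r + -(xi1 L k (j + 1) y r)
            + xi2 L k j y r + -(xi2 L k (j + 1) y r) + xi3 L k j y r
            + -(xi3 L k (j + 1) y r)) + (k : ℝ) * xi4 y (j + 1) := by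
          simp only [Gmap, hcdef]
          ring
        rw [he]
        refine le_trans hq (le_of_eq ?_)
        ring
      have hsum1 : ∑ i ∈ Finset.range m, (Gmap L k lam y r (i + 1)) ^ 2
          ≤ 7 * c ^ 2 * (∑ i ∈ Finset.range m, (xi1 L k i y r) ^ 2)
            + 7 * c ^ 2 * (∑ i ∈ Finset.range m, (xi1 L k (i + 1) y r) ^ 2)
            + 7 * c ^ 2 * (∑ i ∈ Finset.range m, (xi2 L k i y r) ^ 2)
            + 7 * c ^ 2 * (∑ i ∈ Finset.range m, (xi2 L k (i + 1) y r) ^ 2)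
            + 7 * c ^ 2 * (∑ i ∈ Finset.range m, (xi3 L k i y r) ^ 2)
            + 7 * c ^ 2 * (∑ i ∈ Finset.range m, (xi3 L k (i + 1) y r) ^ 2)
            + 7 * (k : ℝ) ^ 2 * (∑ i ∈ Finset.range m, (xi4 y (i + 1)) ^ 2) := by
        calc ∑ i ∈ Finset.range m, (Gmap L k lam y r (i + 1)) ^ 2
            ≤ ∑ i ∈ Finset.range m, (7 * c ^ 2 * (xi1 L k i y r) ^ 2
                + 7 * c ^ 2 * (xi1 L k (i + 1) y r) ^ 2
                + 7 * c ^ 2 * (xi2 L k i y r) ^ 2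
                + 7 * c ^ 2 * (xi2 L k (i + 1) y r) ^ 2
                + 7 * c ^ 2 * (xi3 L k i y r) ^ 2
                + 7 * c ^ 2 * (xi3 L k (i + 1) y r) ^ 2
                + 7 * (k : ℝ) ^ 2 * (xi4 y (i + 1)) ^ 2) := by
              refine Finset.sum_le_sum fun i _ => le_trans (hstep i) (le_of_eq ?_)
              ring
          _ = _ := by
              simp only [Finset.sum_add_distrib, ← Finset.mul_sum]
      -- shifted sums absorb the 0-terms
      have hsh1 : (∑ i ∈ Finset.range m, (xi1 L k (i + 1) y r) ^ 2) + (xi1 L k 0 y r) ^ 2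
          = ∑ i ∈ Finset.range (m + 1), (xi1 L k i y r) ^ 2 :=
        (Finset.sum_range_succ' (fun i => (xi1 L k i y r) ^ 2) m).symm
      have hsh2 : (∑ i ∈ Finset.range m, (xi2 L k (i + 1) y r) ^ 2) + (xi2 L k 0 y r) ^ 2
          = ∑ i ∈ Finset.range (m + 1), (xi2 L k i y r) ^ 2 :=
        (Finset.sum_range_succ' (fun i => (xi2 L k i y r) ^ 2) m).symm
      have hsh3 : (∑ i ∈ Finset.range m, (xi3 L k (i + 1) y r) ^ 2) + (xi3 L k 0 y r) ^ 2
          = ∑ i ∈ Finset.range (m + 1), (xi3 L k i y r) ^ 2 :=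
        (Finset.sum_range_succ' (fun i => (xi3 L k i y r) ^ 2) m).symm
      have hsh4 : (∑ i ∈ Finset.range m, (xi4 y (i + 1)) ^ 2) + (xi4 y 0) ^ 2
          = ∑ i ∈ Finset.range (m + 1), (xi4 y i) ^ 2 :=
        (Finset.sum_range_succ' (fun i => (xi4 y i) ^ 2) m).symm
      have h7c2 : (0 : ℝ) ≤ 7 * c ^ 2 := by positivity
      have h7k2 : (0 : ℝ) ≤ 7 * (k : ℝ) ^ 2 := by positivity
      have m1 := mul_le_mul_of_nonneg_left (hF1 m) h7c2
      have m2 : 7 * c ^ 2 * ((∑ i ∈ Finset.range m, (xi1 L k (i + 1) y r) ^ 2)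
          + (xi1 L k 0 y r) ^ 2) ≤ 7 * c ^ 2 * (K1 ^ 2 * M * Ty) := by
        rw [hsh1]; exact mul_le_mul_of_nonneg_left (hF1 (m + 1)) h7c2
      have m3 := mul_le_mul_of_nonneg_left (hF2 m) h7c2
      have m4 : 7 * c ^ 2 * ((∑ i ∈ Finset.range m, (xi2 L k (i + 1) y r) ^ 2)
          + (xi2 L k 0 y r) ^ 2) ≤ 7 * c ^ 2 * (K2 ^ 2 * Ty) := by
        rw [hsh2]; exact mul_le_mul_of_nonneg_left (hF2 (m + 1)) h7c2
      have m5 := mul_le_mul_of_nonneg_left (hF3 m) h7c2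
      have m6 : 7 * c ^ 2 * ((∑ i ∈ Finset.range m, (xi3 L k (i + 1) y r) ^ 2)
          + (xi3 L k 0 y r) ^ 2) ≤ 7 * c ^ 2 * (K2 ^ 2 * (M + 1) * Ty) := by
        rw [hsh3]; exact mul_le_mul_of_nonneg_left (hF3 (m + 1)) h7c2
      have m7 : 7 * (k : ℝ) ^ 2 * ((∑ i ∈ Finset.range m, (xi4 y (i + 1)) ^ 2)
          + (xi4 y 0) ^ 2) ≤ 7 * (k : ℝ) ^ 2 * (4 * Ty) := by
        rw [hsh4]; exact mul_le_mul_of_nonneg_left (hF4 (m + 1)) h7k2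
      have hDeq : D * Ty = 7 * c ^ 2 * (K1 ^ 2 * M * Ty) + 7 * c ^ 2 * (K1 ^ 2 * M * Ty)
          + 7 * c ^ 2 * (K2 ^ 2 * Ty) + 7 * c ^ 2 * (K2 ^ 2 * Ty)
          + 7 * c ^ 2 * (K2 ^ 2 * (M + 1) * Ty) + 7 * c ^ 2 * (K2 ^ 2 * (M + 1) * Ty)
          + 7 * (k : ℝ) ^ 2 * (4 * Ty) := by
        rw [hDdef]; ring
      rw [hDeq]
      nlinarith [hsum1, h0, m1, m2, m3, m4, m5, m6, m7]
  -- conclude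
  have hGy : ∀ i, Gmap L k lam x r i - Gmap L k lam xt r i = Gmap L k lam y r i := by
    intro i
    rw [hydef]
    exact (Gmap_sub L k lam r hxs hxts i).symm
  have hts : ∑' i, (Gmap L k lam x r i - Gmap L k lam xt r i) ^ 2
      = ∑' i, (Gmap L k lam y r i) ^ 2 := tsum_congr fun i => by rw [hGy i]
  have htyeq : ∑' j, (x j - xt j) ^ 2 = Ty := by
    rw [hTydef]
    exact tsum_congr fun j => by rw [hyval j]
  rw [hts, htyeq]
  have hsum_le : ∑' i, (Gmap L k lam y r i) ^ 2 ≤ D * Ty :=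
    Real.tsum_le_of_sum_range_le (fun i => sq_nonneg _) hG
  calc Real.sqrt (∑' i, (Gmap L k lam y r i) ^ 2)
      ≤ Real.sqrt (D * Ty) := Real.sqrt_le_sqrt hsum_le
    _ = Real.sqrt D * Real.sqrt Ty := Real.sqrt_mul hDpos.le Ty
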